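/- arXiv:2208.14373 — 3 statements merged into one kernel-verified Lean document; each statement's English description precedes it below -/
import Mathlib

section
/- Conservation of mass under the Hermite-basis change-of-parameters map (Proposition, part (i)): Let N ∈ ℕ, let α', α > 0 and u', u ∈ ℝ, and let c_0, …, c_N be real numbers. Define f(v) := Σ_{m=0}^N c_m·ψ_m^{α',u'}(v) and g(v) := Σ_{n=0}^N (Σ_{m=0}^N ℙ_{n,m}·c_m)·ψ_n^{α,u}(v). Then ∫_ℝ g(v) dv = ∫_ℝ f(v) dv. -/
/-!
Since `H_n' = 2n H_{n-1}`, the recurrence gives `(H_n e^{-x²})' = -H_{n+1} e^{-x²}`, so every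
`ψ_n` with `n ≥ 1` has integral zero and `∫ ψ_0^{α,u} = α`. Hence both sides only see the
coefficient of `ψ_0`, and `ψ_0^{α,u} ω = α⁻¹` makes row `0` of `ℙ` equal to `(α'/α) e_0`.
-/

open MeasureTheory Real Finset

/-- Physicists' Hermite polynomials: `H 0 x = 1`, `H 1 x = 2x`,
`H (n+1) x = 2x · H n x − 2n · H (n−1) x`. -/
noncomputable def physHermite : ℕ → ℝ → ℝ
  | 0 => fun _ => 1
  | 1 => fun x => 2 * x
  | (n + 2) => fun x => 2 * x * physHermite (n + 1) x - 2 * ((n : ℝ) + 1) * physHermite n x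

/-- Asymmetrically weighted Hermite function
`ψ_n^{α,u}(v) = (π·2^n·n!)^{-1/2} · H_n((v−u)/α) · exp(−((v−u)/α)²)`. -/
noncomputable def awHermite (α u : ℝ) (n : ℕ) (v : ℝ) : ℝ :=
  (Real.sqrt (Real.pi * 2 ^ n * (n.factorial : ℝ)))⁻¹ * physHermite n ((v - u) / α) *
    Real.exp (-((v - u) / α) ^ 2)

/-- The weight `ω(v) = √π · α⁻¹ · exp(((v−u)/α)²)`. -/
noncomputable def hermiteWeight (α u : ℝ) (v : ℝ) : ℝ :=
  Real.sqrt Real.pi * α⁻¹ * Real.exp (((v - u) / α) ^ 2)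

/-- Transformation matrix entries `ℙ_{n,m} = ∫ ψ_m^{α',u'}(v) · ψ_n^{α,u}(v) · ω(v) dv`. -/
noncomputable def transferMatrix (α' u' α u : ℝ) (n m : ℕ) : ℝ :=
  ∫ v : ℝ, awHermite α' u' m v * awHermite α u n v * hermiteWeight α u v

open Filter Topology Polynomial

lemma physHermite_succ (n : ℕ) (x : ℝ) :
    physHermite (n + 1) x = 2 * x * physHermite n x - 2 * n * physHermite (n - 1) x := by
  cases n with
  | zero => simp [physHermite]
  | succ n => simp only [physHermite, Nat.add_sub_cancel]; push_cast; ring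

lemma hasDerivAt_physHermite (n : ℕ) (x : ℝ) :
    HasDerivAt (physHermite n) (2 * n * physHermite (n - 1) x) x := by
  induction n using Nat.twoStepInduction generalizing x with
  | zero => simpa [physHermite] using hasDerivAt_const x (1 : ℝ)
  | one => simpa [physHermite] using (hasDerivAt_id x).const_mul (2 : ℝ)
  | more n ih₀ ih₁ =>
    have h := (((hasDerivAt_id x).const_mul 2).mul (ih₁ x)).sub
      ((ih₀ x).const_mul (2 * ((n : ℝ) + 1)))
    refine h.congr_deriv ?_
    simp only [Nat.add_sub_cancel, id]
    push_cast
    linear_combination (-2 * ((n : ℝ) + 1)) * physHermite_succ n x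

lemma hasDerivAt_physHermite_mul_gaussian (n : ℕ) (x : ℝ) :
    HasDerivAt (fun y => physHermite n y * exp (-y ^ 2))
      (-(physHermite (n + 1) x * exp (-x ^ 2))) x := by
  have hgauss : HasDerivAt (fun y => exp (-y ^ 2)) (exp (-x ^ 2) * -(2 * x)) x := by
    simpa using (hasDerivAt_pow 2 x).neg.exp
  have h := (hasDerivAt_physHermite n x).mul hgauss
  refine h.congr_deriv ?_
  rw [physHermite_succ]
  ring

lemma exists_eval_eq_physHermite (n : ℕ) : ∃ p : ℝ[X], ∀ x, p.eval x = physHermite n x := by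
  induction n using Nat.twoStepInduction with
  | zero => exact ⟨1, fun x => by simp [physHermite]⟩
  | one => exact ⟨C 2 * X, fun x => by simp [physHermite]⟩
  | more n ih₀ ih₁ =>
    obtain ⟨p₀, hp₀⟩ := ih₀
    obtain ⟨p₁, hp₁⟩ := ih₁
    exact ⟨C 2 * X * p₁ - C (2 * ((n : ℝ) + 1)) * p₀, fun x => by simp [physHermite, hp₀, hp₁]⟩

lemma integrable_pow_mul_gaussian (k : ℕ) : Integrable fun x : ℝ => x ^ k * exp (-x ^ 2) := by
  simpa using integrable_rpow_mul_exp_neg_mul_sq one_pos (s := k)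
    (by linarith [k.cast_nonneg (α := ℝ)])

lemma tendsto_pow_mul_gaussian_cocompact (k : ℕ) :
    Tendsto (fun x : ℝ => x ^ k * exp (-x ^ 2)) (cocompact ℝ) (𝓝 0) := by
  rw [tendsto_zero_iff_norm_tendsto_zero]
  simpa [abs_pow] using tendsto_rpow_abs_mul_exp_neg_mul_sq_cocompact one_pos k

lemma eval_mul_gaussian_eq_sum (p : ℝ[X]) (x : ℝ) :
    p.eval x * exp (-x ^ 2) =
      ∑ i ∈ range (p.natDegree + 1), p.coeff i * (x ^ i * exp (-x ^ 2)) := by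
  simp only [eval_eq_sum_range, sum_mul, mul_assoc]

lemma integrable_eval_mul_gaussian (p : ℝ[X]) :
    Integrable fun x : ℝ => p.eval x * exp (-x ^ 2) := by
  simp_rw [eval_mul_gaussian_eq_sum]
  exact integrable_finsetSum _ fun i _ => (integrable_pow_mul_gaussian i).const_mul _

lemma tendsto_eval_mul_gaussian_cocompact (p : ℝ[X]) :
    Tendsto (fun x : ℝ => p.eval x * exp (-x ^ 2)) (cocompact ℝ) (𝓝 0) := by
  simp_rw [eval_mul_gaussian_eq_sum]
  simpa using tendsto_finsetSum _ fun i _ => (tendsto_pow_mul_gaussian_cocompact i).const_mul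
    (p.coeff i)

lemma integrable_physHermite_mul_gaussian (n : ℕ) :
    Integrable fun x : ℝ => physHermite n x * exp (-x ^ 2) := by
  obtain ⟨p, hp⟩ := exists_eval_eq_physHermite n
  simpa only [hp] using integrable_eval_mul_gaussian p

lemma tendsto_physHermite_mul_gaussian_cocompact (n : ℕ) :
    Tendsto (fun x : ℝ => physHermite n x * exp (-x ^ 2)) (cocompact ℝ) (𝓝 0) := by
  obtain ⟨p, hp⟩ := exists_eval_eq_physHermite n
  simpa only [hp] using tendsto_eval_mul_gaussian_cocompact p

lemma integral_physHermite_mul_gaussian (n : ℕ) :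
    ∫ x : ℝ, physHermite n x * exp (-x ^ 2) = if n = 0 then √π else 0 := by
  cases n with
  | zero => simpa [physHermite] using integral_gaussian 1
  | succ n =>
    have hlim := tendsto_physHermite_mul_gaussian_cocompact n
    rw [cocompact_eq_atBot_atTop] at hlim
    have h := integral_of_hasDerivAt_of_tendsto (hasDerivAt_physHermite_mul_gaussian n)
      (integrable_physHermite_mul_gaussian (n + 1)).neg (hlim.mono_left le_sup_left)
      (hlim.mono_left le_sup_right)
    simpa [integral_neg] using h

lemma awHermite_eq_const_mul (α u : ℝ) (n : ℕ) (v : ℝ) : awHermite α u n v =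
    (√(π * 2 ^ n * n.factorial))⁻¹ * (physHermite n ((v - u) / α) * exp (-((v - u) / α) ^ 2)) := by
  rw [awHermite, mul_assoc]

lemma integrable_awHermite {α : ℝ} (hα : α ≠ 0) (u : ℝ) (n : ℕ) :
    Integrable (awHermite α u n) := by
  simpa only [← awHermite_eq_const_mul] using
    (((integrable_physHermite_mul_gaussian n).comp_div hα).comp_sub_right u).const_mul
      (√(π * 2 ^ n * n.factorial))⁻¹

lemma integral_awHermite {α : ℝ} (hα : α ≠ 0) (u : ℝ) (n : ℕ) :
    ∫ v, awHermite α u n v = if n = 0 then |α| else 0 := by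
  simp_rw [awHermite_eq_const_mul]
  rw [integral_const_mul,
    integral_sub_right_eq_self (fun x => physHermite n (x / α) * exp (-(x / α) ^ 2)),
    Measure.integral_comp_div (fun x => physHermite n x * exp (-x ^ 2)), smul_eq_mul,
    integral_physHermite_mul_gaussian]
  split_ifs with hn
  · subst hn
    field_simp
    simp
  · simp

lemma awHermite_zero_mul_hermiteWeight (α u v : ℝ) :
    awHermite α u 0 v * hermiteWeight α u v = α⁻¹ := by
  have hπ : (√π)⁻¹ * √π = 1 := inv_mul_cancel₀ (by positivity)
  have hexp : exp (-((v - u) / α) ^ 2) * exp (((v - u) / α) ^ 2) = 1 := by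
    rw [← exp_add, neg_add_cancel, exp_zero]
  simp only [awHermite, hermiteWeight, physHermite, pow_zero, Nat.factorial_zero, Nat.cast_one,
    mul_one]
  linear_combination α⁻¹ * (exp (-((v - u) / α) ^ 2) * exp (((v - u) / α) ^ 2)) * hπ + α⁻¹ * hexp

lemma transferMatrix_zero_left {α' : ℝ} (hα' : α' ≠ 0) (u' α u : ℝ) (m : ℕ) :
    transferMatrix α' u' α u 0 m = if m = 0 then |α'| / α else 0 := by
  simp only [transferMatrix, mul_assoc, awHermite_zero_mul_hermiteWeight]
  rw [integral_mul_const, integral_awHermite hα', ite_mul, zero_mul, div_eq_mul_inv]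

lemma integral_sum_mul_awHermite {α : ℝ} (hα : α ≠ 0) (u : ℝ) (a : ℕ → ℝ) (N : ℕ) :
    ∫ v, ∑ n ∈ range (N + 1), a n * awHermite α u n v = |α| * a 0 := by
  rw [integral_finsetSum _ fun n _ => (integrable_awHermite hα u n).const_mul (a n)]
  simp_rw [integral_const_mul, integral_awHermite hα, mul_ite, mul_zero]
  rw [sum_ite_eq', if_pos (mem_range.2 N.succ_pos), mul_comm]

/-- Conservation of mass under the Hermite-basis change-of-parameters map. -/
theorem mass_conservation_change_of_basis (N : ℕ) (α' α u' u : ℝ)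
    (hα' : 0 < α') (hα : 0 < α) (c : ℕ → ℝ) :
    (∫ v : ℝ, ∑ n ∈ Finset.range (N + 1),
        (∑ m ∈ Finset.range (N + 1), transferMatrix α' u' α u n m * c m) * awHermite α u n v)
      = ∫ v : ℝ, ∑ m ∈ Finset.range (N + 1), c m * awHermite α' u' m v := by
  rw [integral_sum_mul_awHermite hα.ne', integral_sum_mul_awHermite hα'.ne']
  simp_rw [transferMatrix_zero_left hα'.ne', ite_mul, zero_mul]
  rw [sum_ite_eq', if_pos (mem_range.2 N.succ_pos), abs_of_pos hα, abs_of_pos hα']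
  field_simp
end

section
/- The weighted orthogonal projection between Hermite approximation spaces preserves all polynomial moments up to degree N: Let N ∈ ℕ, α', α > 0, u', u ∈ ℝ, and set ω(v) := √π·α^{−1}·e^{((v−u)/α)²}. Suppose f is a real linear combination of ψ_0^{α',u'}, …, ψ_N^{α',u'} and g is a real linear combination of ψ_0^{α,u}, …, ψ_N^{α,u} such that ∫_ℝ (g(v) − f(v))·ψ_n^{α,u}(v)·ω(v) dv = 0 for every 0 ≤ n ≤ N. Then for every real polynomial p of degree at most N, ∫_ℝ g(v)·p(v) dv = ∫_ℝ f(v)·p(v) dv. -/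
/-
The weight `ω` cancels the Gaussian factor of `ψ_n^{α,u}`, so the orthogonality hypotheses say
that `g - f` is orthogonal, for the plain Lebesgue integral, to the polynomials
`H_n((v - u)/α)`, `n ≤ N`. These have degree exactly `n`, hence span all polynomials of degree
at most `N`; so every moment of `g - f` of order at most `N` vanishes. The Gaussian decay of the
`ψ`'s makes all these moments integrable.
-/

open MeasureTheory Real Finset

open Polynomial

noncomputable def physHermitePoly : ℕ → ℝ[X]
  | 0 => 1
  | 1 => C 2 * X
  | n + 2 => C 2 * X * physHermitePoly (n + 1) - C (2 * ((n : ℝ) + 1)) * physHermitePoly n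

theorem eval_physHermitePoly (n : ℕ) (x : ℝ) :
    (physHermitePoly n).eval x = physHermite n x := by
  induction n using Nat.strong_induction_on with
  | _ n ih =>
    match n with
    | 0 => simp [physHermitePoly, physHermite]
    | 1 => simp [physHermitePoly, physHermite]
    | n + 2 =>
      simp only [physHermitePoly, physHermite, eval_sub, eval_mul, eval_C, eval_X,
        ih (n + 1) (by omega), ih n (by omega)]

theorem degree_physHermitePoly (n : ℕ) : (physHermitePoly n).degree = n := by
  induction n using Nat.strong_induction_on with
  | _ n ih =>
    match n with
    | 0 => simp [physHermitePoly]
    | 1 => simp [physHermitePoly]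
    | n + 2 =>
      have hlead : (C 2 * X * physHermitePoly (n + 1)).degree = ↑(n + 2) := by
        rw [degree_mul, degree_C_mul_X two_ne_zero, ih (n + 1) (by omega)]
        norm_cast
        omega
      have htail : (C (2 * ((n : ℝ) + 1)) * physHermitePoly n).degree < ↑(n + 2) := by
        rw [degree_C_mul (by positivity), ih n (by omega)]; norm_cast; omega
      rw [physHermitePoly, degree_sub_eq_left_of_degree_lt (hlead ▸ htail), hlead]

noncomputable def physHermiteSeq : Polynomial.Sequence ℝ where
  elems' := physHermitePoly
  degree_eq' := degree_physHermitePoly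

namespace Polynomial.Sequence

noncomputable def comp {R : Type*} [Semiring R] [NoZeroDivisors R] (S : Sequence R) (q : R[X])
    (hq : q.degree = 1) : Sequence R where
  elems' i := (S i).comp q
  degree_eq' i := by rw [degree_comp (by rw [hq]; exact zero_lt_one), S.degree_eq, hq, mul_one]

theorem map_eq_zero_of_natDegree_le {K M : Type*} [Field K] [AddCommGroup M]
    [Module K M] (S : Sequence K) (φ : K[X] →ₗ[K] M) {N : ℕ} (hS : ∀ i ≤ N, φ (S i) = 0)
    {p : K[X]} (hp : p.natDegree ≤ N) : φ p = 0 := by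
  have hspan : p ∈ Submodule.span K (S '' Set.Iic N) := by
    rw [S.span_degreeLE fun i _ => (leadingCoeff_ne_zero.mpr (S.ne_zero i)).isUnit,
      mem_degreeLE]
    exact natDegree_le_iff_degree_le.mp hp
  refine (Submodule.span_le (p := LinearMap.ker φ)).mpr ?_ hspan
  rintro _ ⟨i, hi, rfl⟩
  exact hS i hi

end Polynomial.Sequence

theorem degree_C_mul_X_sub_C {R : Type*} [Ring R] [IsDomain R] {a : R} (ha : a ≠ 0) (u : R) :
    (C a * (X - C u)).degree = 1 := by
  rw [degree_C_mul ha, degree_X_sub_C]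

theorem integrable_pow_mul_exp_neg_mul_sq {b : ℝ} (hb : 0 < b) (n : ℕ) :
    Integrable fun x : ℝ => x ^ n * exp (-b * x ^ 2) := by
  simpa only [rpow_natCast] using
    integrable_rpow_mul_exp_neg_mul_sq hb (s := n) (by linarith [n.cast_nonneg (α := ℝ)])

theorem integrable_eval_mul_exp_neg_mul_sq {b : ℝ} (hb : 0 < b) (q : ℝ[X]) :
    Integrable fun x : ℝ => q.eval x * exp (-b * x ^ 2) := by
  induction q using Polynomial.induction_on' with
  | add p q hp hq =>
    simp only [eval_add, add_mul]
    exact hp.add hq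
  | monomial n a =>
    simpa only [eval_monomial, mul_assoc] using
      (integrable_pow_mul_exp_neg_mul_sq hb n).const_mul a

theorem integrable_eval_mul_exp_neg_sq_div {β : ℝ} (hβ : β ≠ 0) (w : ℝ) (q : ℝ[X]) :
    Integrable fun v : ℝ => q.eval v * exp (-((v - w) / β) ^ 2) := by
  refine ((integrable_eval_mul_exp_neg_mul_sq (b := β⁻¹ ^ 2) (by positivity)
    (q.comp (X + C w))).comp_sub_right w).congr (ae_of_all _ fun v => ?_)
  simp only [eval_comp, eval_add, eval_X, eval_C, sub_add_cancel, div_eq_inv_mul, mul_pow,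
    neg_mul]

noncomputable def scaledPhysHermitePoly (α u : ℝ) (n : ℕ) : ℝ[X] :=
  (physHermitePoly n).comp (C α⁻¹ * (X - C u))

theorem awHermite_eq (α u : ℝ) (n : ℕ) (v : ℝ) :
    awHermite α u n v = (√(π * 2 ^ n * n.factorial))⁻¹ *
      (scaledPhysHermitePoly α u n).eval v * exp (-((v - u) / α) ^ 2) := by
  simp only [awHermite, scaledPhysHermitePoly, eval_comp, eval_mul, eval_sub, eval_C, eval_X,
    eval_physHermitePoly, div_eq_inv_mul]

theorem awHermite_mul_hermiteWeight (α u : ℝ) (n : ℕ) (v : ℝ) :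
    awHermite α u n v * hermiteWeight α u v = (√(π * 2 ^ n * n.factorial))⁻¹ * √π * α⁻¹ *
      (scaledPhysHermitePoly α u n).eval v := by
  have hexp : exp (-((v - u) / α) ^ 2) * exp (((v - u) / α) ^ 2) = 1 := by
    rw [← exp_add, neg_add_cancel, exp_zero]
  rw [awHermite_eq, hermiteWeight]
  linear_combination ((√(π * 2 ^ n * n.factorial))⁻¹ * √π * α⁻¹ *
      (scaledPhysHermitePoly α u n).eval v) * hexp

theorem integral_mul_awHermite_mul_hermiteWeight (h : ℝ → ℝ) (α u : ℝ) (n : ℕ) :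
    ∫ v, h v * awHermite α u n v * hermiteWeight α u v = (√(π * 2 ^ n * n.factorial))⁻¹ * √π *
      α⁻¹ * ∫ v, h v * (scaledPhysHermitePoly α u n).eval v := by
  simp only [mul_assoc, awHermite_mul_hermiteWeight, ← integral_const_mul]
  congr 1 with v
  ring

theorem integrable_awHermite_mul_eval {β : ℝ} (hβ : β ≠ 0) (w : ℝ) (m : ℕ) (q : ℝ[X]) :
    Integrable fun v : ℝ => awHermite β w m v * q.eval v := by
  refine (integrable_eval_mul_exp_neg_sq_div hβ w (C (√(π * 2 ^ m * m.factorial))⁻¹ *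
    scaledPhysHermitePoly β w m * q)).congr (ae_of_all _ fun v => ?_)
  simp only [awHermite_eq, eval_mul, eval_C]
  ring

theorem integrable_sum_awHermite_mul_eval {β : ℝ} (hβ : β ≠ 0) (w : ℝ) (s : Finset ℕ)
    (c : ℕ → ℝ) (q : ℝ[X]) :
    Integrable fun v : ℝ => (∑ m ∈ s, c m * awHermite β w m v) * q.eval v := by
  simp only [Finset.sum_mul, mul_assoc]
  exact integrable_finsetSum _ fun m _ => (integrable_awHermite_mul_eval hβ w m q).const_mul _

noncomputable def momentFunctional {μ : Measure ℝ} (h : ℝ → ℝ)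
    (hh : ∀ q : ℝ[X], Integrable (fun v => h v * q.eval v) μ) : ℝ[X] →ₗ[ℝ] ℝ where
  toFun q := ∫ v, h v * q.eval v ∂μ
  map_add' p q := by simp only [eval_add, mul_add, integral_add (hh p) (hh q)]
  map_smul' a q := by simp only [eval_smul, smul_eq_mul, mul_left_comm, integral_const_mul,
    RingHom.id_apply]

/-- The weighted orthogonal projection between Hermite approximation spaces
preserves all polynomial moments up to degree `N`. -/
theorem projection_preserves_moments (N : ℕ) (α' α u' u : ℝ)
    (hα' : 0 < α') (hα : 0 < α) (f g : ℝ → ℝ) (c d : ℕ → ℝ)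
    (hf : ∀ v : ℝ, f v = ∑ m ∈ Finset.range (N + 1), c m * awHermite α' u' m v)
    (hg : ∀ v : ℝ, g v = ∑ n ∈ Finset.range (N + 1), d n * awHermite α u n v)
    (horth : ∀ n ≤ N,
      (∫ v : ℝ, (g v - f v) * awHermite α u n v * hermiteWeight α u v) = 0)
    (p : Polynomial ℝ) (hp : p.natDegree ≤ N) :
    (∫ v : ℝ, g v * p.eval v) = ∫ v : ℝ, f v * p.eval v := by
  have hfq (q : ℝ[X]) : Integrable fun v => f v * q.eval v := by
    simpa only [hf] using integrable_sum_awHermite_mul_eval hα'.ne' u' _ c q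
  have hgq (q : ℝ[X]) : Integrable fun v => g v * q.eval v := by
    simpa only [hg] using integrable_sum_awHermite_mul_eval hα.ne' u _ d q
  let φ := momentFunctional (fun v => g v - f v) fun q => by
    simp only [sub_mul]
    exact (hgq q).sub (hfq q)
  let H := physHermiteSeq.comp (C α⁻¹ * (X - C u))
    (degree_C_mul_X_sub_C (inv_ne_zero hα.ne') u)
  have hH (n : ℕ) (hn : n ≤ N) : φ (H n) = 0 := by
    have h := horth n hn
    rw [integral_mul_awHermite_mul_hermiteWeight] at h
    exact (mul_eq_zero.mp h).resolve_left (by positivity)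
  have hφp : ∫ v, (g v - f v) * p.eval v = 0 := H.map_eq_zero_of_natDegree_le φ hH hp
  rw [← sub_eq_zero, ← integral_sub (hgq p) (hfq p)]
  simpa only [sub_mul] using hφp
end

section
/- Low-order entries of the transformation matrix: For all α', α > 0 and u', u ∈ ℝ, one has ℙ_{1,0} = −√2·(α'/α²)·(u − u'), ℙ_{2,0} = (√2/2)·(α'/α)·(2(u − u')²/α² + (α')²/α² − 1), and ℙ_{2,1} = −2·((α')²/α³)·(u − u'). -/
open MeasureTheory Real Finset

open scoped Nat

/-! Substituting `v = u' + α' t` in `ℙ_{n,m}` makes the weight cancel the Gaussian factor of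
`ψ_n^{α,u}`, leaving `α'` times a normalising constant times
`∫ H_m(t) H_n((α' t + u' − u)/α) e^{−t²} dt`. For `n, m ≤ 2` the product of Hermite polynomials
is a cubic in `t`, and the Gaussian moments `∫ t^k e^{−t²} dt` for `k = 0, 1, 2, 3` are
`√π, 0, √π/2, 0`: odd moments vanish by symmetry, and integrating `(t^{k+1} e^{−t²})'` gives
the recursion between even ones. -/

lemma physHermite_two (x : ℝ) : physHermite 2 x = 4 * x ^ 2 - 2 := by
  simp only [physHermite]; norm_num; ring

lemma integrable_pow_mul_exp_neg_sq (n : ℕ) :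
    Integrable fun x : ℝ => x ^ n * exp (-x ^ 2) := by
  simpa [rpow_natCast] using
    integrable_rpow_mul_exp_neg_mul_sq one_pos (s := n) (by linarith [n.cast_nonneg (α := ℝ)])

lemma integral_pow_mul_exp_neg_sq_of_odd {n : ℕ} (hn : Odd n) :
    ∫ x : ℝ, x ^ n * exp (-x ^ 2) = 0 := by
  have h := integral_neg_eq_self (fun x : ℝ => x ^ n * exp (-x ^ 2)) volume
  simp only [hn.neg_pow, neg_sq, neg_mul, integral_neg] at h
  linarith

lemma integral_pow_add_two_mul_exp_neg_sq (n : ℕ) :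
    ∫ x : ℝ, x ^ (n + 2) * exp (-x ^ 2) = (n + 1) / 2 * ∫ x : ℝ, x ^ n * exp (-x ^ 2) := by
  have hderiv : ∀ x : ℝ, HasDerivAt (fun x => x ^ (n + 1) * exp (-x ^ 2))
      ((n + 1) * (x ^ n * exp (-x ^ 2)) - 2 * (x ^ (n + 2) * exp (-x ^ 2))) x := by
    intro x
    refine ((hasDerivAt_pow (n + 1) x).fun_mul (hasDerivAt_pow 2 x).fun_neg.exp).congr_deriv ?_
    simp only [add_tsub_cancel_right, Nat.cast_add, Nat.cast_one, Nat.cast_ofNat]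
    ring
  have h := integral_eq_zero_of_hasDerivAt_of_integrable hderiv
    (((integrable_pow_mul_exp_neg_sq n).const_mul _).sub
      ((integrable_pow_mul_exp_neg_sq (n + 2)).const_mul 2))
    (integrable_pow_mul_exp_neg_sq (n + 1))
  rw [integral_sub ((integrable_pow_mul_exp_neg_sq n).const_mul _)
      ((integrable_pow_mul_exp_neg_sq (n + 2)).const_mul 2),
    integral_const_mul, integral_const_mul] at h
  linarith

lemma integral_cubic_mul_exp_neg_sq {p : ℝ → ℝ} (a b c d : ℝ)
    (hp : ∀ x, p x = a + b * x + c * x ^ 2 + d * x ^ 3) :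
    ∫ x : ℝ, p x * exp (-x ^ 2) = a * √π + c * (√π / 2) := by
  have hI := integrable_pow_mul_exp_neg_sq
  have h0 : ∫ x : ℝ, x ^ 0 * exp (-x ^ 2) = √π := by simpa using integral_gaussian 1
  have h2 : ∫ x : ℝ, x ^ 2 * exp (-x ^ 2) = √π / 2 := by
    rw [integral_pow_add_two_mul_exp_neg_sq 0, h0]; ring
  have h1 := integral_pow_mul_exp_neg_sq_of_odd (n := 1) odd_one
  have h3 := integral_pow_mul_exp_neg_sq_of_odd (n := 3) (by decide)
  have hsplit : ∀ x, p x * exp (-x ^ 2) = a * (x ^ 0 * exp (-x ^ 2)) + b * (x ^ 1 * exp (-x ^ 2))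
      + c * (x ^ 2 * exp (-x ^ 2)) + d * (x ^ 3 * exp (-x ^ 2)) := fun x => by rw [hp]; ring
  simp_rw [hsplit]
  rw [integral_add (((hI 0).const_mul a).fun_add ((hI 1).const_mul b) |>.fun_add
      ((hI 2).const_mul c)) ((hI 3).const_mul d),
    integral_add (((hI 0).const_mul a).fun_add ((hI 1).const_mul b)) ((hI 2).const_mul c),
    integral_add ((hI 0).const_mul a) ((hI 1).const_mul b)]
  simp only [integral_const_mul, h0, h1, h2, h3]
  ring

lemma awHermite_mul_awHermite_mul_hermiteWeight {α' : ℝ} (hα' : α' ≠ 0) (u' α u : ℝ)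
    (n m : ℕ) (v : ℝ) :
    awHermite α' u' m v * awHermite α u n v * hermiteWeight α u v =
      (α * √π * √(2 ^ n * n ! * (2 ^ m * m !)))⁻¹ * (physHermite m ((v - u') / α') *
        physHermite n ((α' * ((v - u') / α') + (u' - u)) / α) * exp (-((v - u') / α') ^ 2)) := by
  have hv : α' * ((v - u') / α') + (u' - u) = v - u := by field_simp; ring
  have hexp : exp (-((v - u) / α) ^ 2) * exp (((v - u) / α) ^ 2) = 1 := by
    rw [← exp_add]; simp
  have hprod : √(π * 2 ^ m * m !) * √(π * 2 ^ n * n !) = π * √(2 ^ n * n ! * (2 ^ m * m !)) := by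
    rw [← sqrt_mul (by positivity), show π * 2 ^ m * m ! * (π * 2 ^ n * n !) =
      π ^ 2 * (2 ^ n * n ! * (2 ^ m * m !)) by ring, sqrt_mul (by positivity), sqrt_sq pi_nonneg]
  have hnorm : (α * √π * √(2 ^ n * n ! * (2 ^ m * m !)))⁻¹ =
      (√(π * 2 ^ m * m !))⁻¹ * (√(π * 2 ^ n * n !))⁻¹ * √π * α⁻¹ := by
    have hπ : √π ≠ 0 := (sqrt_pos.2 pi_pos).ne'
    rw [← mul_inv, hprod]
    field_simp
    rw [sq_sqrt pi_nonneg]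
  simp only [awHermite, hermiteWeight, hv, hnorm]
  linear_combination (√(π * 2 ^ m * m !))⁻¹ * (√(π * 2 ^ n * n !))⁻¹ * √π * α⁻¹ *
    physHermite m ((v - u') / α') * physHermite n ((v - u) / α) *
      exp (-((v - u') / α') ^ 2) * hexp

theorem transferMatrix_eq_integral {α' : ℝ} (hα' : 0 < α') (u' α u : ℝ) (n m : ℕ) :
    transferMatrix α' u' α u n m = α' / (α * √π * √(2 ^ n * n ! * (2 ^ m * m !))) *
      ∫ t : ℝ, physHermite m t * physHermite n ((α' * t + (u' - u)) / α) * exp (-t ^ 2) := by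
  set G : ℝ → ℝ := fun t => physHermite m t * physHermite n ((α' * t + (u' - u)) / α) *
    exp (-t ^ 2)
  simp_rw [transferMatrix, awHermite_mul_awHermite_mul_hermiteWeight hα'.ne']
  rw [integral_const_mul, integral_sub_right_eq_self (fun v => G (v / α')) u',
    Measure.integral_comp_div G α', abs_of_pos hα', smul_eq_mul]
  ring

lemma transferMatrix_one_zero {α' : ℝ} (hα' : 0 < α') (u' α u : ℝ) :
    transferMatrix α' u' α u 1 0 = -√2 * (α' / α ^ 2) * (u - u') := by
  rw [transferMatrix_eq_integral hα',
    integral_cubic_mul_exp_neg_sq (2 * (u' - u) / α) (2 * α' / α) 0 0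
      (fun t => by simp only [physHermite]; ring)]
  norm_num
  field_simp
  rw [sq_sqrt zero_le_two]
  ring

lemma transferMatrix_two_zero {α' : ℝ} (hα' : 0 < α') (u' α u : ℝ) :
    transferMatrix α' u' α u 2 0 =
      √2 / 2 * (α' / α) * (2 * (u - u') ^ 2 / α ^ 2 + α' ^ 2 / α ^ 2 - 1) := by
  rw [transferMatrix_eq_integral hα', integral_cubic_mul_exp_neg_sq
    (4 * (u' - u) ^ 2 / α ^ 2 - 2) (8 * α' * (u' - u) / α ^ 2) (4 * α' ^ 2 / α ^ 2) 0
    (fun t => by rw [physHermite_two]; simp only [physHermite]; ring)]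
  norm_num
  field_simp
  rw [← sqrt_mul (by norm_num), show (8 : ℝ) * 2 = 4 ^ 2 by norm_num, sqrt_sq (by norm_num)]
  ring

lemma transferMatrix_two_one {α' : ℝ} (hα' : 0 < α') (u' α u : ℝ) :
    transferMatrix α' u' α u 2 1 = -2 * (α' ^ 2 / α ^ 3) * (u - u') := by
  rw [transferMatrix_eq_integral hα', integral_cubic_mul_exp_neg_sq 0
    (8 * (u' - u) ^ 2 / α ^ 2 - 4) (16 * α' * (u' - u) / α ^ 2) (8 * α' ^ 2 / α ^ 2)
    (fun t => by rw [physHermite_two]; simp only [physHermite]; ring)]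
  norm_num
  field_simp
  ring

theorem transferMatrix_low_order_entries_general (α' α u' u : ℝ) (hα' : 0 < α') :
    transferMatrix α' u' α u 1 0 = -Real.sqrt 2 * (α' / α ^ 2) * (u - u') ∧
    transferMatrix α' u' α u 2 0
      = Real.sqrt 2 / 2 * (α' / α) *
          (2 * (u - u') ^ 2 / α ^ 2 + α' ^ 2 / α ^ 2 - 1) ∧
    transferMatrix α' u' α u 2 1 = -2 * (α' ^ 2 / α ^ 3) * (u - u') :=
  ⟨transferMatrix_one_zero hα' u' α u, transferMatrix_two_zero hα' u' α u,
    transferMatrix_two_one hα' u' α u⟩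

/-- Low-order entries of the transformation matrix. -/
theorem transferMatrix_low_order_entries (α' α u' u : ℝ) (hα' : 0 < α') (hα : 0 < α) :
    transferMatrix α' u' α u 1 0 = -Real.sqrt 2 * (α' / α ^ 2) * (u - u') ∧
    transferMatrix α' u' α u 2 0
      = Real.sqrt 2 / 2 * (α' / α) *
          (2 * (u - u') ^ 2 / α ^ 2 + α' ^ 2 / α ^ 2 - 1) ∧
    transferMatrix α' u' α u 2 1 = -2 * (α' ^ 2 / α ^ 3) * (u - u') :=
  transferMatrix_low_order_entries_general α' α u' u hα'
end
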